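/- In the almost cosymplectic case k=0, λ=√(−κ) with κ<0, c=μ/2, the principal Ricci curvatures are r1 = 2κ, r2 = μ√(−κ), r3 = −μ√(−κ), the scalar curvature is 2κ, and the signature pattern of (r1,r2,r3) is either (−,0,0) (when μ=0) or a permutation of (−,−,+) (when μ≠0). -/

import Mathlib

/-!
The Koszul formula determines the Levi-Civita connection of the bracket `br k lam c` explicitly;
tracing its curvature gives Milnor's formulas for the unimodular frame `(ξ, E1, E2)`, which at
`k = 0`, `lam = √(-κ)`, `c = μ / 2` read `2κ, μ√(-κ), -μ√(-κ)`. The signs then follow from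
`√(-κ) > 0`.
-/

noncomputable section

def ξ : Fin 3 → ℝ := ![1, 0, 0]
def E1 : Fin 3 → ℝ := ![0, 1, 0]
def E2 : Fin 3 → ℝ := ![0, 0, 1]

/-- Inner product making (ξ, E1, E2) orthonormal. -/
def ip (x y : Fin 3 → ℝ) : ℝ := x 0 * y 0 + x 1 * y 1 + x 2 * y 2

/-- Bracket [E1,E2] = 2k ξ, [E2,ξ] = −(λ+c) E1, [ξ,E1] = (λ−c) E2. -/
def br (k lam c : ℝ) (x y : Fin 3 → ℝ) : Fin 3 → ℝ :=
  ![2 * k * (x 1 * y 2 - x 2 * y 1),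
    (lam + c) * (x 0 * y 2 - x 2 * y 0),
    (lam - c) * (x 0 * y 1 - x 1 * y 0)]

def leviCivita (k lam c : ℝ) (X Y : Fin 3 → ℝ) : Fin 3 → ℝ :=
  ![(lam + k) * (X 1 * Y 2) + (lam - k) * (X 2 * Y 1),
    (c + k) * (X 0 * Y 2) + (k - lam) * (X 2 * Y 0),
    -((c + k) * (X 0 * Y 1)) - (lam + k) * (X 1 * Y 0)]

theorem eq_leviCivita_of_koszul {k lam c : ℝ}
    {nabla : (Fin 3 → ℝ) → (Fin 3 → ℝ) → (Fin 3 → ℝ)}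
    (hK : ∀ X Y Z, 2 * ip (nabla X Y) Z =
      ip (br k lam c X Y) Z - ip (br k lam c Y Z) X + ip (br k lam c Z X) Y) :
    nabla = leviCivita k lam c := by
  funext X Y i
  have hξ := hK X Y ξ
  have hE1 := hK X Y E1
  have hE2 := hK X Y E2
  simp only [ip, br, ξ, E1, E2, Matrix.cons_val_zero, Matrix.cons_val_one, Matrix.cons_val_two,
    Matrix.head_cons, Matrix.tail_cons] at hξ hE1 hE2
  fin_cases i <;> simp only [leviCivita, Fin.zero_eta, Fin.mk_one, Fin.reduceFinMk,
    Matrix.cons_val_zero, Matrix.cons_val_one, Matrix.cons_val_two, Matrix.head_cons, Matrix.tail_cons]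
  · linear_combination hξ / 2
  · linear_combination hE1 / 2
  · linear_combination hE2 / 2

def curvature (nabla bracket : (Fin 3 → ℝ) → (Fin 3 → ℝ) → (Fin 3 → ℝ))
    (X Y Z : Fin 3 → ℝ) : Fin 3 → ℝ :=
  nabla X (nabla Y Z) - nabla Y (nabla X Z) - nabla (bracket X Y) Z

def ricci (R : (Fin 3 → ℝ) → (Fin 3 → ℝ) → (Fin 3 → ℝ) → (Fin 3 → ℝ))
    (X : Fin 3 → ℝ) : ℝ :=
  ip (R ξ X X) ξ + ip (R E1 X X) E1 + ip (R E2 X X) E2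

section MilnorFormulas

/- Milnor's `r(e₁) = 2 μ₂ μ₃` (cyclically), for the structure constants `(2k, -(lam + c), lam - c)`,
where `μᵢ = (λ₁ + λ₂ + λ₃) / 2 - λᵢ` equals `-(k + c)`, `k + lam`, `k - lam`. -/

variable (k lam c : ℝ)

theorem ricci_leviCivita_ξ :
    ricci (curvature (leviCivita k lam c) (br k lam c)) ξ = 2 * (k + lam) * (k - lam) := by
  simp only [ricci, curvature, leviCivita, ip, br, ξ, E1, E2, Pi.sub_apply, Matrix.cons_val_zero,
    Matrix.cons_val_one, Matrix.cons_val_two, Matrix.head_cons, Matrix.tail_cons]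
  ring

theorem ricci_leviCivita_E1 :
    ricci (curvature (leviCivita k lam c) (br k lam c)) E1 = 2 * (k + c) * (lam - k) := by
  simp only [ricci, curvature, leviCivita, ip, br, ξ, E1, E2, Pi.sub_apply, Matrix.cons_val_zero,
    Matrix.cons_val_one, Matrix.cons_val_two, Matrix.head_cons, Matrix.tail_cons]
  ring

theorem ricci_leviCivita_E2 :
    ricci (curvature (leviCivita k lam c) (br k lam c)) E2 = -2 * (k + c) * (k + lam) := by
  simp only [ricci, curvature, leviCivita, ip, br, ξ, E1, E2, Pi.sub_apply, Matrix.cons_val_zero,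
    Matrix.cons_val_one, Matrix.cons_val_two, Matrix.head_cons, Matrix.tail_cons]
  ring

end MilnorFormulas

/-- Almost cosymplectic case k = 0, λ = √(−κ) (κ < 0), c = μ/2: the principal Ricci
curvatures are r1 = 2κ, r2 = μ√(−κ), r3 = −μ√(−κ), the scalar curvature is 2κ, and the
signature of (r1,r2,r3) is (−,0,0) when μ = 0 and a permutation of (−,−,+) when μ ≠ 0. -/
theorem ricci_almost_cosymplectic_case (κ μ : ℝ) (hκ : κ < 0)
    (lam c : ℝ) (hlam : lam = Real.sqrt (-κ)) (hc : c = μ / 2)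
    (nabla : (Fin 3 → ℝ) → (Fin 3 → ℝ) → (Fin 3 → ℝ))
    (hK : ∀ X Y Z, 2 * ip (nabla X Y) Z =
      ip (br 0 lam c X Y) Z - ip (br 0 lam c Y Z) X + ip (br 0 lam c Z X) Y)
    (R : (Fin 3 → ℝ) → (Fin 3 → ℝ) → (Fin 3 → ℝ) → (Fin 3 → ℝ))
    (hR : ∀ X Y Z, R X Y Z =
      nabla X (nabla Y Z) - nabla Y (nabla X Z) - nabla (br 0 lam c X Y) Z)
    (Ric : (Fin 3 → ℝ) → ℝ)
    (hRic : ∀ X, Ric X = ip (R ξ X X) ξ + ip (R E1 X X) E1 + ip (R E2 X X) E2) :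
    Ric ξ = 2 * κ ∧
    Ric E1 = μ * Real.sqrt (-κ) ∧
    Ric E2 = -μ * Real.sqrt (-κ) ∧
    Ric ξ + Ric E1 + Ric E2 = 2 * κ ∧
    (μ = 0 → Ric ξ < 0 ∧ Ric E1 = 0 ∧ Ric E2 = 0) ∧
    (μ ≠ 0 → Ric ξ < 0 ∧
      ((Ric E1 < 0 ∧ 0 < Ric E2) ∨ (0 < Ric E1 ∧ Ric E2 < 0))) := by
  obtain rfl := eq_leviCivita_of_koszul hK
  obtain rfl : R = curvature (leviCivita 0 lam c) (br 0 lam c) := funext₃ hR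
  obtain rfl : Ric = ricci (curvature (leviCivita 0 lam c) (br 0 lam c)) := funext hRic
  have hsq : lam * lam = -κ := hlam ▸ Real.mul_self_sqrt (by linarith)
  have hpos : 0 < lam := hlam ▸ Real.sqrt_pos.mpr (by linarith)
  rw [ricci_leviCivita_ξ, ricci_leviCivita_E1, ricci_leviCivita_E2, ← hlam, hc]
  refine ⟨by linarith, by ring, by ring, by linarith, fun hμ => ?_, fun hμ => ?_⟩
  · subst hμ
    exact ⟨by nlinarith, by ring, by ring⟩
  · refine ⟨by nlinarith, ?_⟩
    rcases hμ.lt_or_gt with hμneg | hμpos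
    · exact Or.inl ⟨by nlinarith, by nlinarith⟩
    · exact Or.inr ⟨by nlinarith, by nlinarith⟩
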